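/- Let k be a field of characteristic not 2, Λ the exterior algebra on c generators, A = Λ ⋊ C_2, and λ ∈ k^c nonzero with u_λ = Σ λ_i x_i. Then the sequence ... → A → A → A → ... in which each map is right multiplication by u_λ ⊗ e is exact; consequently the left A-module A u_λ satisfies Ω_A¹(A u_λ) ≅ A u_λ, i.e. it is 1-periodic. -/

import Mathlib

open TensorProduct

noncomputable section

inductive SkewRel (k : Type) [Field k] (c : ℕ) :
    FreeAlgebra k (Option (Fin c)) → FreeAlgebra k (Option (Fin c)) → Prop
  | hh : SkewRel k c (FreeAlgebra.ι k (none : Option (Fin c)) * FreeAlgebra.ι k none) 1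
  | xx (i : Fin c) : SkewRel k c (FreeAlgebra.ι k (some i) * FreeAlgebra.ι k (some i)) 0
  | anticomm (i j : Fin c) :
      SkewRel k c (FreeAlgebra.ι k (some i) * FreeAlgebra.ι k (some j))
        (-(FreeAlgebra.ι k (some j) * FreeAlgebra.ι k (some i)))
  | hx (i : Fin c) :
      SkewRel k c (FreeAlgebra.ι k (none : Option (Fin c)) * FreeAlgebra.ι k (some i))
        (-(FreeAlgebra.ι k (some i) * FreeAlgebra.ι k none))

/-- The skew group algebra `A = Λ ⋊ C₂`. -/
def SkewAlg (k : Type) [Field k] (c : ℕ) : Type := RingQuot (SkewRel k c)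

instance (k : Type) [Field k] (c : ℕ) : Ring (SkewAlg k c) := by
  unfold SkewAlg; infer_instance

instance (k : Type) [Field k] (c : ℕ) : Algebra k (SkewAlg k c) := by
  unfold SkewAlg; infer_instance

/-- The group-like generator `h` of `A = Λ ⋊ C₂`. -/
def SkewAlg.h (k : Type) [Field k] (c : ℕ) : SkewAlg k c :=
  RingQuot.mkAlgHom k (SkewRel k c) (FreeAlgebra.ι k none)

/-- The exterior generators `xᵢ` of `A = Λ ⋊ C₂`. -/
def SkewAlg.x (k : Type) [Field k] (c : ℕ) (i : Fin c) : SkewAlg k c :=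
  RingQuot.mkAlgHom k (SkewRel k c) (FreeAlgebra.ι k (some i))

/-- Right multiplication by `u` on `A`, as a map of left `A`-modules. -/
def SkewAlg.rmul (k : Type) [Field k] (c : ℕ) (u : SkewAlg k c) :
    SkewAlg k c →ₗ[SkewAlg k c] SkewAlg k c where
  toFun a := a * u
  map_add' a b := add_mul a b u
  map_smul' a b := by simp [smul_eq_mul, mul_assoc]

/-! Sending `h ↦ e_none` and `xᵢ ↦ eᵢ` identifies `A` with the Clifford algebra of the quadratic
form `v ↦ v_none²` on `k^{1+c}`, and `u_λ` with `ι(0, λ)`, a vector of square zero. In a Clifford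
algebra, if `d` is a linear form with `d m = 1`, the contraction identity
`(a * ι m) ⌊ d = d m • a - (a ⌊ d) * ι m` shows that `a * ι m = 0` forces `a = (a ⌊ d) * ι m`:
the kernel of right multiplication by `ι m` is its image. -/

open CliffordAlgebra

theorem Finset.sum_mul_self_of_pairwise_anticomm {ι R : Type*} [Ring R] (s : Finset ι)
    (f : ι → R) (hf : (s : Set ι).Pairwise fun i j => f i * f j + f j * f i = 0) :
    (∑ i ∈ s, f i) * (∑ i ∈ s, f i) = ∑ i ∈ s, f i * f i := by
  classical
  induction s using Finset.induction_on with
  | empty => simp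
  | insert a s ha ih =>
    rw [Finset.coe_insert, Set.pairwise_insert] at hf
    have hcross : f a * ∑ i ∈ s, f i + (∑ i ∈ s, f i) * f a = 0 := by
      rw [Finset.mul_sum, Finset.sum_mul, ← Finset.sum_add_distrib]
      exact Finset.sum_eq_zero fun j hj => (hf.2 j hj (ne_of_mem_of_not_mem hj ha).symm).1
    have hexpand : (f a + ∑ i ∈ s, f i) * (f a + ∑ i ∈ s, f i) =
        f a * f a + (f a * ∑ i ∈ s, f i + (∑ i ∈ s, f i) * f a) +
          (∑ i ∈ s, f i) * (∑ i ∈ s, f i) := by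
      noncomm_ring
    rw [Finset.sum_insert ha, Finset.sum_insert ha, hexpand, hcross, ih hf.1, add_zero]

namespace CliffordAlgebra

variable {R M : Type*} [CommRing R] [AddCommGroup M] [Module R M] {Q : QuadraticForm R M}

theorem contractRight_mul_ι_of_mul_ι_eq_zero {m : M} {d : Module.Dual R M} (hd : d m = 1)
    {a : CliffordAlgebra Q} (ha : a * ι Q m = 0) : contractRight a d * ι Q m = a := by
  have h := contractRight_mul_ι (d := d) m a
  rwa [ha, hd, one_smul, map_zero, LinearMap.zero_apply, eq_comm, sub_eq_zero, eq_comm] at h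

theorem exists_mul_ι_eq_of_mul_ι_eq_zero {K V : Type*} [Field K] [AddCommGroup V] [Module K V]
    {Q : QuadraticForm K V} {m : V} (hm : m ≠ 0) {a : CliffordAlgebra Q}
    (ha : a * ι Q m = 0) : ∃ b, b * ι Q m = a :=
  have ⟨d, hd⟩ := Module.Projective.exists_dual_eq_one K hm
  ⟨contractRight a d, contractRight_mul_ι_of_mul_ι_eq_zero hd ha⟩

end CliffordAlgebra

namespace SkewAlg

variable (k : Type) [Field k] (c : ℕ)

@[simp] theorem rmul_apply (u a : SkewAlg k c) : rmul k c u a = a * u := rfl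

def gen (o : Option (Fin c)) : SkewAlg k c :=
  RingQuot.mkAlgHom k (SkewRel k c) (FreeAlgebra.ι k o)

theorem gen_none : gen k c none = h k c := rfl

theorem gen_some (i : Fin c) : gen k c (some i) = x k c i := rfl

theorem h_mul_h : h k c * h k c = 1 := by
  have := RingQuot.mkAlgHom_rel k (SkewRel.hh (k := k) (c := c))
  rwa [map_mul, map_one] at this

theorem x_mul_x (i : Fin c) : x k c i * x k c i = 0 := by
  have := RingQuot.mkAlgHom_rel k (SkewRel.xx (k := k) (c := c) i)
  rwa [map_mul, map_zero] at this

theorem x_mul_x_eq_neg (i j : Fin c) : x k c i * x k c j = -(x k c j * x k c i) := by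
  have := RingQuot.mkAlgHom_rel k (SkewRel.anticomm (k := k) (c := c) i j)
  rwa [map_mul, map_neg, map_mul] at this

theorem h_mul_x (i : Fin c) : h k c * x k c i = -(x k c i * h k c) := by
  have := RingQuot.mkAlgHom_rel k (SkewRel.hx (k := k) (c := c) i)
  rwa [map_mul, map_neg, map_mul] at this

theorem gen_mul_gen_add_swap {o o' : Option (Fin c)} (hne : o ≠ o') :
    gen k c o * gen k c o' + gen k c o' * gen k c o = 0 := by
  rcases o with _ | i <;> rcases o' with _ | j
  · exact absurd rfl hne
  · rw [gen_none, gen_some, h_mul_x, neg_add_cancel]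
  · rw [gen_none, gen_some, h_mul_x, add_neg_cancel]
  · rw [gen_some, gen_some, x_mul_x_eq_neg, neg_add_cancel]

def quadForm : QuadraticForm k (Option (Fin c) → k) :=
  QuadraticMap.sq.comp (LinearMap.proj none)

@[simp] theorem quadForm_apply (v : Option (Fin c) → k) : quadForm k c v = v none * v none := rfl

def ofVec : (Option (Fin c) → k) →ₗ[k] SkewAlg k c :=
  Fintype.linearCombination k (gen k c)

theorem ofVec_mul_self (v : Option (Fin c) → k) :
    ofVec k c v * ofVec k c v = algebraMap k (SkewAlg k c) (quadForm k c v) := by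
  have hpair : ((Finset.univ : Finset (Option (Fin c))) : Set _).Pairwise
      fun o o' => v o • gen k c o * v o' • gen k c o' + v o' • gen k c o' * v o • gen k c o = 0 :=
    fun o _ o' _ hne => by
      beta_reduce
      rw [smul_mul_smul_comm, smul_mul_smul_comm, mul_comm (v o'), ← smul_add,
        gen_mul_gen_add_swap k c hne, smul_zero]
  rw [ofVec, Fintype.linearCombination_apply, Finset.sum_mul_self_of_pairwise_anticomm _ _ hpair]
  simp [Fintype.sum_option, gen_none, gen_some, h_mul_h, x_mul_x,
    Algebra.algebraMap_eq_smul_one, smul_smul]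

theorem polar_quadForm_single {o o' : Option (Fin c)} (hne : o ≠ o') :
    QuadraticMap.polar (quadForm k c) (Pi.single o 1) (Pi.single o' 1) = 0 := by
  rcases o with _ | i <;> rcases o' with _ | j <;> simp_all [QuadraticMap.polar]

theorem ι_single_anticomm {o o' : Option (Fin c)} (hne : o ≠ o') :
    ι (quadForm k c) (Pi.single o 1) * ι (quadForm k c) (Pi.single o' 1) =
      -(ι (quadForm k c) (Pi.single o' 1) * ι (quadForm k c) (Pi.single o 1)) := by
  rw [eq_neg_iff_add_eq_zero, ι_mul_ι_add_swap, polar_quadForm_single k c hne, map_zero]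

def toClifford : SkewAlg k c →ₐ[k] CliffordAlgebra (quadForm k c) :=
  RingQuot.liftAlgHom k
    ⟨FreeAlgebra.lift k fun o => ι (quadForm k c) (Pi.single o 1), by
      intro a b hab
      induction hab with
      | hh => simp [ι_sq_scalar]
      | xx i => simp [ι_sq_scalar]
      | anticomm i j =>
        rcases eq_or_ne i j with rfl | hij
        · simp [ι_sq_scalar]
        · simpa using ι_single_anticomm k c (Option.some_injective _ |>.ne hij)
      | hx i => simpa using ι_single_anticomm k c (Option.some_ne_none i).symm⟩

@[simp] theorem toClifford_gen (o : Option (Fin c)) :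
    toClifford k c (gen k c o) = ι (quadForm k c) (Pi.single o 1) :=
  (RingQuot.liftAlgHom_mkAlgHom_apply _ _ _ _).trans (FreeAlgebra.lift_ι_apply _ _)

def ofClifford : CliffordAlgebra (quadForm k c) →ₐ[k] SkewAlg k c :=
  CliffordAlgebra.lift (quadForm k c) ⟨ofVec k c, ofVec_mul_self k c⟩

@[simp] theorem ofClifford_ι (v : Option (Fin c) → k) :
    ofClifford k c (ι (quadForm k c) v) = ofVec k c v :=
  CliffordAlgebra.lift_ι_apply _ _ _

theorem toClifford_ofVec (v : Option (Fin c) → k) :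
    toClifford k c (ofVec k c v) = ι (quadForm k c) v := by
  conv_rhs => rw [← (Pi.basisFun k _).sum_repr v]
  simp [ofVec, Fintype.linearCombination_apply, map_sum]

def equivClifford : SkewAlg k c ≃ₐ[k] CliffordAlgebra (quadForm k c) :=
  AlgEquiv.ofAlgHom (toClifford k c) (ofClifford k c)
    (CliffordAlgebra.hom_ext <| LinearMap.ext fun v => by simp [toClifford_ofVec])
    (RingQuot.ringQuot_ext' _ _ _ <| FreeAlgebra.hom_ext <| funext fun o => by
      change ofClifford k c (toClifford k c (gen k c o)) = gen k c o
      rw [toClifford_gen, ofClifford_ι, ofVec, Fintype.linearCombination_apply_single, one_smul])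

theorem exists_mul_ofVec_eq_of_mul_ofVec_eq_zero {v : Option (Fin c) → k} (hv : v ≠ 0)
    {a : SkewAlg k c} (ha : a * ofVec k c v = 0) : ∃ b, b * ofVec k c v = a := by
  have hv' : equivClifford k c (ofVec k c v) = ι (quadForm k c) v := toClifford_ofVec k c v
  obtain ⟨b, hb⟩ := exists_mul_ι_eq_of_mul_ι_eq_zero hv (a := equivClifford k c a)
    (by rw [← hv', ← map_mul, ha, map_zero])
  exact ⟨(equivClifford k c).symm b, (equivClifford k c).injective <| by
    rw [map_mul, AlgEquiv.apply_symm_apply, hv', hb]⟩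

theorem ofVec_elim (lam : Fin c → k) :
    ofVec k c (fun o => o.elim 0 lam) = ∑ i, lam i • x k c i := by
  simp [ofVec, Fintype.linearCombination_apply, Fintype.sum_option, gen_some]

end SkewAlg

open SkewAlg in
theorem stmt12_general (k : Type) [Field k] (c : ℕ)
    (lam : Fin c → k) (hlam : lam ≠ 0) :
    letI u : SkewAlg k c := ∑ i, lam i • SkewAlg.x k c i
    LinearMap.ker (SkewAlg.rmul k c u) = LinearMap.range (SkewAlg.rmul k c u) ∧
    LinearMap.range (SkewAlg.rmul k c u) = Submodule.span (SkewAlg k c) {u} ∧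
    Nonempty (↥(LinearMap.ker (SkewAlg.rmul k c u)) ≃ₗ[SkewAlg k c]
      ↥(Submodule.span (SkewAlg k c) {u})) := by
  set u : SkewAlg k c := ∑ i, lam i • x k c i
  set w : Option (Fin c) → k := fun o => o.elim 0 lam
  have hu : u = ofVec k c w := (ofVec_elim k c lam).symm
  have hw : w ≠ 0 := fun h => hlam <| funext fun i => congrFun h (some i)
  have hsq : u * u = 0 := by simp [hu, ofVec_mul_self, w]
  have hker : LinearMap.ker (rmul k c u) = LinearMap.range (rmul k c u) := by
    ext a
    simp only [LinearMap.mem_ker, LinearMap.mem_range, rmul_apply]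
    constructor
    · rw [hu]
      exact exists_mul_ofVec_eq_of_mul_ofVec_eq_zero k c hw
    · rintro ⟨b, rfl⟩
      rw [mul_assoc, hsq, mul_zero]
  have hrange : LinearMap.range (rmul k c u) = Submodule.span (SkewAlg k c) {u} := by
    ext a
    simp [Submodule.mem_span_singleton]
  exact ⟨hker, hrange, ⟨LinearEquiv.ofEq _ _ (hker.trans hrange)⟩⟩

/-- Let `k` be a field of characteristic not 2, `A = Λ ⋊ C₂`, and `λ ∈ k^c`
nonzero, with `u_λ = Σ λᵢ xᵢ` (viewed in `A` as `u_λ ⊗ e`). Then the doubly infinite sequence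
`... → A → A → A → ...` given by right multiplication by `u_λ` is exact (the kernel of right
multiplication equals its image `A u_λ`); consequently `Ω¹_A(A u_λ) ≅ A u_λ`, i.e. the left
`A`-module `A u_λ` is 1-periodic. -/
theorem stmt12 (k : Type) [Field k] (hchar : (2 : k) ≠ 0) (c : ℕ)
    (lam : Fin c → k) (hlam : lam ≠ 0) :
    letI u : SkewAlg k c := ∑ i, lam i • SkewAlg.x k c i
    LinearMap.ker (SkewAlg.rmul k c u) = LinearMap.range (SkewAlg.rmul k c u) ∧
    LinearMap.range (SkewAlg.rmul k c u) = Submodule.span (SkewAlg k c) {u} ∧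
    Nonempty (↥(LinearMap.ker (SkewAlg.rmul k c u)) ≃ₗ[SkewAlg k c]
      ↥(Submodule.span (SkewAlg k c) {u})) :=
  stmt12_general k c lam hlam
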